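/- Let (u₁,v₁) and (u₂,v₂) be ε-relatively close δ-squares, and let (s,t) be a δ′-square with O^λ_s = O^γ_t. Then (su₁, tv₁) and (su₂, tv₂) are (δ+δ′)-squares and are ε′-relatively close, where ε′ = ε·e^{δ′} + 2·|e^{δ′} − 1|·e^{δ′+δ+ε}·λ_{u₁}^{−1}. -/
import Mathlib


open Real Set

/-- Product of the contraction ratios (or orientations) along a finite word. -/
def wprod {n : ℕ} (f : Fin n → ℝ) (u : List (Fin n)) : ℝ := (u.map f).prod

/-- The infinite sequence obtained by appending the sequence `ω` to the word `u`. -/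
def wcat {n : ℕ} (u : List (Fin n)) (ω : ℕ → Fin n) : ℕ → Fin n :=
  fun k => if h : k < u.length then u.get ⟨k, h⟩ else ω (k - u.length)

/-- `(u,v)` is a `δ`-square: `λ_u/γ_v ∈ (e^{-δ}, e^{δ})`. -/
def IsSq {A B : ℕ} (lam : Fin A → ℝ) (gam : Fin B → ℝ) (δ : ℝ)
    (u : List (Fin A)) (v : List (Fin B)) : Prop :=
  wprod lam u / wprod gam v ∈ Set.Ioo (Real.exp (-δ)) (Real.exp δ)

/-- `(u₁,v₁)` and `(u₂,v₂)` are `ε`-relatively close (Definition 2.2), where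
`L(ω,τ) = Π_λ(ω) + Π_γ(τ)` and `1̄` is realized as the constant sequence `0`. -/
def RelClose {A B : ℕ} (lam Ol : Fin (A + 1) → ℝ) (gam Og : Fin (B + 1) → ℝ)
    (Pl : (ℕ → Fin (A + 1)) → ℝ) (Pg : (ℕ → Fin (B + 1)) → ℝ) (D ε : ℝ)
    (u1 : List (Fin (A + 1))) (v1 : List (Fin (B + 1)))
    (u2 : List (Fin (A + 1))) (v2 : List (Fin (B + 1))) : Prop :=
  wprod lam u1 / wprod lam u2 ∈ Set.Ioo (Real.exp (-ε)) (Real.exp ε) ∧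
  wprod gam v1 / wprod gam v2 ∈ Set.Ioo (Real.exp (-ε)) (Real.exp ε) ∧
  wprod Ol u1 = wprod Ol u2 ∧ wprod Og v1 = wprod Og v2 ∧
  |(Pl (wcat u1 fun _ => 0) + Pg (wcat v1 fun _ => 0)) -
      (Pl (wcat u2 fun _ => 0) + Pg (wcat v2 fun _ => 0))| <
    ε * D * min (min (wprod lam u1) (wprod lam u2)) (min (wprod gam v1) (wprod gam v2))

lemma wprod_nil {n : ℕ} (f : Fin n → ℝ) : wprod f [] = 1 := rfl

lemma wprod_cons {n : ℕ} (f : Fin n → ℝ) (a : Fin n) (s : List (Fin n)) :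
    wprod f (a :: s) = f a * wprod f s := by simp [wprod]

lemma wprod_append {n : ℕ} (f : Fin n → ℝ) (s u : List (Fin n)) :
    wprod f (s ++ u) = wprod f s * wprod f u := by simp [wprod]

lemma wprod_pos {n : ℕ} {f : Fin n → ℝ} (hf : ∀ i, 0 < f i) (s : List (Fin n)) :
    0 < wprod f s := by
  induction s with
  | nil => norm_num [wprod_nil]
  | cons a s ih => rw [wprod_cons]; exact mul_pos (hf a) ih

lemma abs_wprod_one {n : ℕ} {f : Fin n → ℝ} (hf : ∀ i, f i = 1 ∨ f i = -1)
    (s : List (Fin n)) : |wprod f s| = 1 := by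
  induction s with
  | nil => norm_num [wprod_nil]
  | cons a s ih =>
    rw [wprod_cons, abs_mul, ih, mul_one]
    rcases hf a with h | h <;> simp [h]

lemma wcat_nil {n : ℕ} (ω : ℕ → Fin n) : wcat [] ω = ω := by
  funext k; simp [wcat]

lemma wcat_cons_zero {n : ℕ} (a : Fin n) (s : List (Fin n)) (ω : ℕ → Fin n) :
    wcat (a :: s) ω 0 = a := by simp [wcat]

lemma wcat_cons_succ {n : ℕ} (a : Fin n) (s : List (Fin n)) (ω : ℕ → Fin n) (k : ℕ) :
    wcat (a :: s) ω (k + 1) = wcat s ω k := by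
  unfold wcat
  by_cases h : k < s.length
  · simp [h, Nat.succ_lt_succ h]
  · have h' : ¬ (k + 1 < (a :: s).length) := by simpa [Nat.succ_lt_succ_iff] using h
    simp [h, h', Nat.succ_sub_succ]

lemma wcat_shift {n : ℕ} (a : Fin n) (s : List (Fin n)) (ω : ℕ → Fin n) :
    (fun k => wcat (a :: s) ω (k + 1)) = wcat s ω :=
  funext fun k => wcat_cons_succ a s ω k

lemma wcat_append {n : ℕ} (s u : List (Fin n)) (ω : ℕ → Fin n) :
    wcat (s ++ u) ω = wcat s (wcat u ω) := by
  induction s with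
  | nil => simp [wcat_nil]
  | cons a s ih =>
    funext k
    cases k with
    | zero => rw [List.cons_append, wcat_cons_zero, wcat_cons_zero]
    | succ k => rw [List.cons_append, wcat_cons_succ, wcat_cons_succ, ih]

lemma Pi_cat {n : ℕ} (f O b : Fin n → ℝ) (P : (ℕ → Fin n) → ℝ)
    (hP : ∀ ω, P ω = O (ω 0) * f (ω 0) * P (fun k => ω (k + 1)) + b (ω 0))
    (s : List (Fin n)) :
    ∃ c : ℝ, ∀ ω, P (wcat s ω) = wprod O s * wprod f s * P ω + c := by
  induction s with
  | nil => exact ⟨0, fun ω => by simp [wprod_nil, wcat_nil]⟩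
  | cons a s ih =>
    obtain ⟨c, hc⟩ := ih
    refine ⟨O a * f a * c + b a, fun ω => ?_⟩
    rw [hP (wcat (a :: s) ω), wcat_cons_zero, wcat_shift, hc ω, wprod_cons, wprod_cons]
    ring


set_option maxHeartbeats 1000000 in
/-- Lemma 2.1: prepending a `δ′`-square `(s,t)` with `O^λ_s = O^γ_t` to two
`ε`-relatively close `δ`-squares yields `(δ+δ′)`-squares that are
`(ε e^{δ′} + 2|e^{δ′}-1| e^{δ′+δ+ε} λ_{u₁}^{-1})`-relatively close. -/
theorem stmt17 (A B : ℕ)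
    (lam Ol bl : Fin (A + 1) → ℝ) (gam Og bg : Fin (B + 1) → ℝ)
    (hlam : ∀ i, lam i ∈ Set.Ioo (0:ℝ) 1) (hgam : ∀ j, gam j ∈ Set.Ioo (0:ℝ) 1)
    (hOl : ∀ i, Ol i = 1 ∨ Ol i = -1) (hOg : ∀ j, Og j = 1 ∨ Og j = -1)
    (Pl : (ℕ → Fin (A + 1)) → ℝ) (Pg : (ℕ → Fin (B + 1)) → ℝ)
    (hPl : ∀ ω, Pl ω = Ol (ω 0) * lam (ω 0) * Pl (fun n => ω (n + 1)) + bl (ω 0))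
    (hPg : ∀ τ, Pg τ = Og (τ 0) * gam (τ 0) * Pg (fun n => τ (n + 1)) + bg (τ 0))
    (D : ℝ) (hD : 0 < D)
    (hrl : ∀ ω, Pl ω ∈ Set.Icc 0 D) (hrg : ∀ τ, Pg τ ∈ Set.Icc 0 D)
    (ε δ δ' : ℝ) (hε : 0 < ε) (hδ : 0 < δ) (hδ' : 0 < δ')
    (u1 u2 s : List (Fin (A + 1))) (v1 v2 t : List (Fin (B + 1)))
    (hsq1 : IsSq lam gam δ u1 v1) (hsq2 : IsSq lam gam δ u2 v2)
    (hrc : RelClose lam Ol gam Og Pl Pg D ε u1 v1 u2 v2)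
    (hst : IsSq lam gam δ' s t) (hOst : wprod Ol s = wprod Og t) :
    IsSq lam gam (δ + δ') (s ++ u1) (t ++ v1) ∧
    IsSq lam gam (δ + δ') (s ++ u2) (t ++ v2) ∧
    RelClose lam Ol gam Og Pl Pg D
      (ε * Real.exp δ' + 2 * |Real.exp δ' - 1| * Real.exp (δ' + δ + ε) * (wprod lam u1)⁻¹)
      (s ++ u1) (t ++ v1) (s ++ u2) (t ++ v2) := by
  obtain ⟨hr1, hr2, hO1, hO2, hL⟩ := hrc
  obtain ⟨hstl, hstr⟩ := hst
  have hlam' : ∀ i, 0 < lam i := fun i => (hlam i).1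
  have hgam' : ∀ j, 0 < gam j := fun j => (hgam j).1
  have hLs := wprod_pos hlam' s
  have hL1 := wprod_pos hlam' u1
  have hL2 := wprod_pos hlam' u2
  have hGt := wprod_pos hgam' t
  have hG1 := wprod_pos hgam' v1
  have hG2 := wprod_pos hgam' v2
  have h1δ : 1 < exp δ := by simpa using Real.exp_lt_exp.mpr hδ
  have h1δ' : 1 < exp δ' := by simpa using Real.exp_lt_exp.mpr hδ'
  have h1ε : 1 < exp ε := by simpa using Real.exp_lt_exp.mpr hε
  have hpδ : exp δ * exp (-δ) = 1 := by rw [← Real.exp_add]; simp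
  have hpδ' : exp δ' * exp (-δ') = 1 := by rw [← Real.exp_add]; simp
  have hpε : exp ε * exp (-ε) = 1 := by rw [← Real.exp_add]; simp
  have habs : |exp δ' - 1| = exp δ' - 1 := abs_of_pos (by linarith)
  have hexp3 : exp (δ' + δ + ε) = exp δ' * exp δ * exp ε := by
    rw [Real.exp_add, Real.exp_add]
  -- squares
  have sqcat : ∀ (u : List (Fin (A + 1))) (v : List (Fin (B + 1))),
      IsSq lam gam δ u v → IsSq lam gam (δ + δ') (s ++ u) (t ++ v) := by
    intro u v ⟨h1, h2⟩
    have hu := wprod_pos hlam' u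
    have hv := wprod_pos hgam' v
    constructor
    · rw [wprod_append, wprod_append]
      calc exp (-(δ + δ')) = exp (-δ) * exp (-δ') := by rw [← Real.exp_add]; ring_nf
        _ < (wprod lam u / wprod gam v) * (wprod lam s / wprod gam t) :=
            mul_lt_mul'' h1 hstl (exp_pos _).le (exp_pos _).le
        _ = wprod lam s * wprod lam u / (wprod gam t * wprod gam v) := by
            rw [div_mul_div_comm]; ring_nf
    · rw [wprod_append, wprod_append]
      calc wprod lam s * wprod lam u / (wprod gam t * wprod gam v)
          = (wprod lam u / wprod gam v) * (wprod lam s / wprod gam t) := by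
            rw [div_mul_div_comm]; ring_nf
        _ < exp δ * exp δ' := mul_lt_mul'' h2 hstr (by positivity) (by positivity)
        _ = exp (δ + δ') := by rw [← Real.exp_add]
  refine ⟨sqcat u1 v1 hsq1, sqcat u2 v2 hsq2, ?_, ?_, ?_, ?_, ?_⟩
  -- ε < ε'
  case _ =>
    -- ratio of lambdas
    have hεE : ε < ε * exp δ' + 2 * |exp δ' - 1| * exp (δ' + δ + ε) * (wprod lam u1)⁻¹ := by
      rw [habs]
      linarith [mul_pos hε (sub_pos.mpr h1δ'),
        mul_pos (mul_pos (sub_pos.mpr h1δ') (exp_pos (δ' + δ + ε))) (inv_pos.mpr hL1)]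
    rw [wprod_append, wprod_append, mul_div_mul_left _ _ (ne_of_gt hLs)]
    exact ⟨lt_trans (Real.exp_lt_exp.mpr (by linarith)) hr1.1,
           lt_trans hr1.2 (Real.exp_lt_exp.mpr hεE)⟩
  case _ =>
    have hεE : ε < ε * exp δ' + 2 * |exp δ' - 1| * exp (δ' + δ + ε) * (wprod lam u1)⁻¹ := by
      rw [habs]
      linarith [mul_pos hε (sub_pos.mpr h1δ'),
        mul_pos (mul_pos (sub_pos.mpr h1δ') (exp_pos (δ' + δ + ε))) (inv_pos.mpr hL1)]
    rw [wprod_append, wprod_append, mul_div_mul_left _ _ (ne_of_gt hGt)]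
    exact ⟨lt_trans (Real.exp_lt_exp.mpr (by linarith)) hr2.1,
           lt_trans hr2.2 (Real.exp_lt_exp.mpr hεE)⟩
  case _ => rw [wprod_append, wprod_append, hO1]
  case _ => rw [wprod_append, wprod_append, hO2]
  -- the distance estimate
  case _ =>
    obtain ⟨cl, hcl⟩ := Pi_cat lam Ol bl Pl hPl s
    obtain ⟨cg, hcg⟩ := Pi_cat gam Og bg Pg hPg t
    have hq1 := hrg (wcat v1 fun _ => 0)
    have hq2 := hrg (wcat v2 fun _ => 0)
    -- basic comparison facts
    have f0 : wprod lam s < exp δ' * wprod gam t := (div_lt_iff₀ hGt).mp hstr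
    have f0' : exp (-δ') * wprod gam t < wprod lam s := (lt_div_iff₀ hGt).mp hstl
    have f2 : wprod lam u1 < exp ε * wprod lam u2 := (div_lt_iff₀ hL2).mp hr1.2
    have f4 : wprod lam u1 < exp δ * wprod gam v1 := (div_lt_iff₀ hG1).mp hsq1.2
    have f6 : wprod lam u2 < exp δ * wprod gam v2 := (div_lt_iff₀ hG2).mp hsq2.2
    simp only [wcat_append, hcl, hcg]
    rw [← hOst, wprod_append, wprod_append, wprod_append, wprod_append,
      ← mul_min_of_nonneg (wprod lam u1) (wprod lam u2) hLs.le,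
      ← mul_min_of_nonneg (wprod gam v1) (wprod gam v2) hGt.le, habs]
    set Ls := wprod lam s with hLsd
    set L1 := wprod lam u1 with hL1d
    set L2 := wprod lam u2 with hL2d
    set Gt := wprod gam t with hGtd
    set G1 := wprod gam v1 with hG1d
    set G2 := wprod gam v2 with hG2d
    set P1 := Pl (wcat u1 fun _ => 0) with hP1d
    set P2 := Pl (wcat u2 fun _ => 0) with hP2d
    set Q1 := Pg (wcat v1 fun _ => 0) with hQ1d
    set Q2 := Pg (wcat v2 fun _ => 0) with hQ2d
    set m := min (min L1 L2) (min G1 G2) with hmd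
    set mL := min L1 L2 with hmLd
    set mG := min G1 G2 with hmGd
    have hmLpos : 0 < mL := lt_min hL1 hL2
    have hmGpos : 0 < mG := lt_min hG1 hG2
    have hmL : m ≤ mL := min_le_left _ _
    have hmG : m ≤ mG := min_le_right _ _
    have he' : exp (-ε) ≤ 1 := by
      simpa using Real.exp_le_exp.mpr (neg_nonpos.mpr hε.le)
    -- the constants
    have k1 : exp (-ε) * L1 ≤ mL := by
      refine le_min ?_ ?_
      · linarith [mul_le_mul_of_nonneg_right he' hL1.le]
      · calc exp (-ε) * L1 ≤ exp (-ε) * (exp ε * L2) :=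
              mul_le_mul_of_nonneg_left f2.le (exp_pos _).le
          _ = L2 := by linear_combination L2 * hpε
    have k2 : exp (-δ) * exp (-ε) * L1 ≤ mG := by
      refine le_min ?_ ?_
      · have g1 : exp (-δ) * L1 ≤ G1 := by
          calc exp (-δ) * L1 ≤ exp (-δ) * (exp δ * G1) :=
                mul_le_mul_of_nonneg_left f4.le (exp_pos _).le
            _ = G1 := by linear_combination G1 * hpδ
        calc exp (-δ) * exp (-ε) * L1 ≤ exp (-δ) * 1 * L1 :=
              mul_le_mul_of_nonneg_right
                (mul_le_mul_of_nonneg_left he' (exp_pos _).le) hL1.le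
          _ = exp (-δ) * L1 := by ring
          _ ≤ G1 := g1
      · calc exp (-δ) * exp (-ε) * L1 ≤ exp (-δ) * exp (-ε) * (exp ε * L2) :=
              mul_le_mul_of_nonneg_left f2.le (by positivity)
          _ = exp (-δ) * L2 := by linear_combination exp (-δ) * L2 * hpε
          _ ≤ exp (-δ) * (exp δ * G2) := mul_le_mul_of_nonneg_left f6.le (exp_pos _).le
          _ = G2 := by linear_combination G2 * hpδ
    -- hA
    have hA : Ls * m ≤ exp δ' * min (Ls * mL) (Gt * mG) := by
      rw [mul_min_of_nonneg _ _ (exp_pos δ').le]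
      refine le_min ?_ ?_
      · have t1 : Ls * m ≤ Ls * mL := mul_le_mul_of_nonneg_left hmL hLs.le
        have t2 : Ls * mL ≤ exp δ' * (Ls * mL) :=
          le_mul_of_one_le_left (by positivity) h1δ'.le
        linarith
      · have t3 : Ls * m ≤ Ls * mG := mul_le_mul_of_nonneg_left hmG hLs.le
        have t4 : Ls * mG ≤ exp δ' * Gt * mG := mul_le_mul_of_nonneg_right f0.le hmGpos.le
        linarith [t3, t4]
    -- hB
    have hB : Gt * L1 ≤ 2 * exp (δ' + δ + ε) * min (Ls * mL) (Gt * mG) := by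
      rw [mul_min_of_nonneg _ _ (by positivity)]
      refine le_min ?_ ?_
      · have f1 : Gt < exp δ' * Ls := by
          have h := mul_lt_mul_of_pos_left f0' (exp_pos δ')
          rw [← mul_assoc, hpδ', one_mul] at h
          exact h
        calc Gt * L1 ≤ exp δ' * Ls * L1 :=
              mul_le_mul_of_nonneg_right f1.le hL1.le
          _ ≤ 2 * exp δ * (exp δ' * Ls * L1) :=
              le_mul_of_one_le_left (by positivity) (by linarith)
          _ = 2 * (exp δ' * exp δ * exp ε) * (Ls * (exp (-ε) * L1)) := by
              linear_combination (-(2 * exp δ' * exp δ * Ls * L1)) * hpε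
          _ ≤ 2 * (exp δ' * exp δ * exp ε) * (Ls * mL) :=
              mul_le_mul_of_nonneg_left
                (mul_le_mul_of_nonneg_left k1 hLs.le) (by positivity)
          _ = 2 * exp (δ' + δ + ε) * (Ls * mL) := by rw [hexp3]
      · calc Gt * L1 ≤ 2 * exp δ' * (Gt * L1) :=
              le_mul_of_one_le_left (by positivity) (by linarith)
          _ = 2 * (exp δ' * exp δ * exp ε) * (Gt * (exp (-δ) * exp (-ε) * L1)) := by
              linear_combination (-(2 * exp δ' * Gt * L1 * exp ε * exp (-ε))) * hpδ
                - (2 * exp δ' * Gt * L1) * hpε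
          _ ≤ 2 * (exp δ' * exp δ * exp ε) * (Gt * mG) :=
              mul_le_mul_of_nonneg_left
                (mul_le_mul_of_nonneg_left k2 hGt.le) (by positivity)
          _ = 2 * exp (δ' + δ + ε) * (Gt * mG) := by rw [hexp3]
    set m' := min (Ls * mL) (Gt * mG) with hm'd
    have hm'pos : 0 < m' := lt_min (mul_pos hLs hmLpos) (mul_pos hGt hmGpos)
    -- rewrite the difference
    have hXeq : (wprod Ol s * Ls * P1 + cl + (wprod Ol s * Gt * Q1 + cg)) -
        (wprod Ol s * Ls * P2 + cl + (wprod Ol s * Gt * Q2 + cg)) =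
        wprod Ol s * (Ls * (P1 - P2) + Gt * (Q1 - Q2)) := by ring
    rw [hXeq, abs_mul, abs_wprod_one hOl s, one_mul]
    -- bounds
    have b2 : |Gt - Ls| ≤ (exp δ' - 1) * Gt := by
      rw [abs_sub_le_iff]
      have h2e : 2 ≤ exp δ' + exp (-δ') := by
        rw [Real.exp_neg]
        have hx := exp_pos δ'
        rw [← sub_nonneg]
        have hr : exp δ' + (exp δ')⁻¹ - 2 = (exp δ' - 1) ^ 2 * (exp δ')⁻¹ := by
          field_simp; ring
        rw [hr]; positivity
      constructor
      · linarith [mul_le_mul_of_nonneg_right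
          (by linarith : 1 - exp (-δ') ≤ exp δ' - 1) hGt.le, f0']
      · linarith
    have b3 : |Q1 - Q2| ≤ D := abs_le.mpr ⟨by linarith [hq1.1, hq2.2], by linarith [hq1.2, hq2.1]⟩
    have key : |Ls * (P1 - P2) + Gt * (Q1 - Q2)| ≤
        Ls * |(P1 + Q1) - (P2 + Q2)| + |Gt - Ls| * |Q1 - Q2| := by
      calc |Ls * (P1 - P2) + Gt * (Q1 - Q2)|
          = |Ls * ((P1 + Q1) - (P2 + Q2)) + (Gt - Ls) * (Q1 - Q2)| := by ring_nf
        _ ≤ |Ls * ((P1 + Q1) - (P2 + Q2))| + |(Gt - Ls) * (Q1 - Q2)| := abs_add_le _ _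
        _ = Ls * |(P1 + Q1) - (P2 + Q2)| + |Gt - Ls| * |Q1 - Q2| := by
            rw [abs_mul, abs_mul, abs_of_pos hLs]
    have b1 : Ls * |(P1 + Q1) - (P2 + Q2)| < Ls * (ε * D * m) := by
      apply mul_lt_mul_of_pos_left _ hLs
      exact hL
    have b23 : |Gt - Ls| * |Q1 - Q2| ≤ (exp δ' - 1) * Gt * D :=
      mul_le_mul b2 b3 (abs_nonneg _) (mul_nonneg (by linarith) hGt.le)
    have pA : Ls * (ε * D * m) ≤ ε * exp δ' * (D * m') := by
      calc Ls * (ε * D * m) = ε * D * (Ls * m) := by ring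
        _ ≤ ε * D * (exp δ' * m') := mul_le_mul_of_nonneg_left hA (by positivity)
        _ = ε * exp δ' * (D * m') := by ring
    have pB : (exp δ' - 1) * Gt * D ≤
        2 * (exp δ' - 1) * exp (δ' + δ + ε) * L1⁻¹ * (D * m') := by
      have hc : (0:ℝ) ≤ (exp δ' - 1) * D * L1⁻¹ :=
        mul_nonneg (mul_nonneg (by linarith) hD.le) (inv_nonneg.mpr hL1.le)
      have h := mul_le_mul_of_nonneg_left hB hc
      have hinv : L1⁻¹ * L1 = 1 := inv_mul_cancel₀ (ne_of_gt hL1)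
      calc (exp δ' - 1) * Gt * D
          = (exp δ' - 1) * D * L1⁻¹ * (Gt * L1) := by
            field_simp
        _ ≤ (exp δ' - 1) * D * L1⁻¹ * (2 * exp (δ' + δ + ε) * m') := h
        _ = 2 * (exp δ' - 1) * exp (δ' + δ + ε) * L1⁻¹ * (D * m') := by ring
    calc |Ls * (P1 - P2) + Gt * (Q1 - Q2)|
        ≤ Ls * |(P1 + Q1) - (P2 + Q2)| + |Gt - Ls| * |Q1 - Q2| := key
      _ < Ls * (ε * D * m) + (exp δ' - 1) * Gt * D := add_lt_add_of_lt_of_le b1 b23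
      _ ≤ ε * exp δ' * (D * m') +
          2 * (exp δ' - 1) * exp (δ' + δ + ε) * L1⁻¹ * (D * m') := add_le_add pA pB
      _ = (ε * exp δ' + 2 * (exp δ' - 1) * exp (δ' + δ + ε) * L1⁻¹) * D * m' := by ring
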